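/- Let H = ℂ² with symplectic form ω_H and E = ℂ^{2n} with symplectic form ω_E, n ≥ 2. With γ₀ = (j_E e₁)⊗h and α₀ = e₁h ∧ e₂h ∧ Σᵢ eᵢh̃ ∧ ẽᵢh̃ − e₁h̃ ∧ e₂h̃ ∧ Σᵢ eᵢh ∧ ẽᵢh (where ẽᵢ = j_E eᵢ, h̃ = j_H h, and xh denotes x⊗h ∈ E⊗H), the interior contraction of α₀ with γ₀ (using the metric ω_E⊗ω_H) equals i_{γ₀}α₀ = Σᵢ eᵢh ∧ ẽᵢh ∧ e₂h̃ − 2 e₁h ∧ e₂h ∧ ẽ₁h̃. -/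

import Mathlib

/-!
Since `ω_H(h, h) = 0`, the vector `γ₀ = ẽ₁h` is orthogonal to every `xh` and pairs with `xh̃`
through `ω_E(ẽ₁, x)`. In the first summand of `α₀` only the last two slots contract, and
unitarity keeps just the terms `i = 1` and `i = n + 1`; as `e_{n+1} = ẽ₁`, each contributes
`−e₁h∧e₂h∧ẽ₁h̃`. In the second summand only `e₁h̃` contracts, with value `−1`, leaving
`e₂h̃∧Σᵢ eᵢh∧ẽᵢh`.
-/

open scoped BigOperators TensorProduct

/-- wedge of four vectors in the exterior algebra -/
noncomputable def wedge4 {T : Type*} [AddCommGroup T] [Module ℂ T] (x₁ x₂ x₃ x₄ : T) :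
    ExteriorAlgebra ℂ T :=
  ExteriorAlgebra.ι ℂ x₁ * ExteriorAlgebra.ι ℂ x₂ * ExteriorAlgebra.ι ℂ x₃ *
    ExteriorAlgebra.ι ℂ x₄

/-- wedge of three vectors in the exterior algebra -/
noncomputable def wedge3 {T : Type*} [AddCommGroup T] [Module ℂ T] (x₁ x₂ x₃ : T) :
    ExteriorAlgebra ℂ T :=
  ExteriorAlgebra.ι ℂ x₁ * ExteriorAlgebra.ι ℂ x₂ * ExteriorAlgebra.ι ℂ x₃

section Contraction

variable {T : Type*} [AddCommGroup T] [Module ℂ T]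

theorem wedge3_rotate (x y z : T) : wedge3 x y z = wedge3 z x y := by
  have swap (a b : T) : ExteriorAlgebra.ι ℂ a * ExteriorAlgebra.ι ℂ b
      = -(ExteriorAlgebra.ι ℂ b * ExteriorAlgebra.ι ℂ a) :=
    eq_neg_of_add_eq_zero_left (ExteriorAlgebra.ι_add_mul_swap a b)
  unfold wedge3
  rw [swap z x, neg_mul, mul_assoc, swap y z, mul_neg, ← mul_assoc]

variable (B : T →ₗ[ℂ] T →ₗ[ℂ] ℂ) (ic : T →ₗ[ℂ] ExteriorAlgebra ℂ T →ₗ[ℂ] ExteriorAlgebra ℂ T)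
  (hic : ∀ γ x₁ x₂ x₃ x₄ : T,
    ic γ (wedge4 x₁ x₂ x₃ x₄)
      = B γ x₁ • wedge3 x₂ x₃ x₄ - B γ x₂ • wedge3 x₁ x₃ x₄
        + B γ x₃ • wedge3 x₁ x₂ x₄ - B γ x₄ • wedge3 x₁ x₂ x₃)
include hic

theorem contract_wedge4_of_orthogonal_left {γ x₁ x₂ : T} (h₁ : B γ x₁ = 0) (h₂ : B γ x₂ = 0)
    (x₃ x₄ : T) :
    ic γ (wedge4 x₁ x₂ x₃ x₄) = B γ x₃ • wedge3 x₁ x₂ x₄ - B γ x₄ • wedge3 x₁ x₂ x₃ := by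
  rw [hic, h₁, h₂, zero_smul, zero_smul, sub_zero, zero_add]

theorem contract_wedge4_of_orthogonal_right {γ x₃ x₄ : T} (h₃ : B γ x₃ = 0) (h₄ : B γ x₄ = 0)
    (x₁ x₂ : T) :
    ic γ (wedge4 x₁ x₂ x₃ x₄) = B γ x₁ • wedge3 x₂ x₃ x₄ - B γ x₂ • wedge3 x₁ x₃ x₄ := by
  rw [hic, h₃, h₄, zero_smul, zero_smul, add_zero, sub_zero]

end Contraction

/-- with `γ₀ = ẽ₁h` and
`α₀ = e₁h∧e₂h∧Σᵢ eᵢh̃∧ẽᵢh̃ − e₁h̃∧e₂h̃∧Σᵢ eᵢh∧ẽᵢh`, the interior contraction of the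
4-vector `α₀` with `γ₀` (with respect to the bilinear form `ω_E⊗ω_H` on `T = E⊗H`)
equals `Σᵢ eᵢh∧ẽᵢh∧e₂h̃ − 2 e₁h∧e₂h∧ẽ₁h̃`.  The unitary basis `{eᵢ}` of `E` is indexed
by `Fin n ⊕ Fin n`, with `ẽ`(first half) = second half and `ẽ`(second half) = −(first
half); `i_γ` is characterized on 4-vectors by `hic`. -/
theorem statement_11
    (n : ℕ) (hn : 2 ≤ n)
    (E H : Type*) [AddCommGroup E] [Module ℂ E] [AddCommGroup H] [Module ℂ H]
    (ωE : E →ₗ[ℂ] E →ₗ[ℂ] ℂ) (hωEskew : ∀ u v : E, ωE u v = - ωE v u)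
    (ωH : H →ₗ[ℂ] H →ₗ[ℂ] ℂ)
    (e te : Fin n ⊕ Fin n → E)
    (hte1 : ∀ i : Fin n, te (Sum.inl i) = e (Sum.inr i))
    (hunit : ∀ i j : Fin n ⊕ Fin n, ωE (e i) (te j) = if i = j then 1 else 0)
    (h th : H) (hH1 : ωH h th = 1) (hH2 : ωH h h = 0)
    -- the complex bilinear metric ω_E ⊗ ω_H on T = E⊗H
    (B : E ⊗[ℂ] H →ₗ[ℂ] E ⊗[ℂ] H →ₗ[ℂ] ℂ)
    (hB : ∀ (a b : E) (c d : H), B (a ⊗ₜ c) (b ⊗ₜ d) = ωE a b * ωH c d)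
    -- interior contraction of a 4-vector with a vector
    (ic : E ⊗[ℂ] H →ₗ[ℂ]
      ExteriorAlgebra ℂ (E ⊗[ℂ] H) →ₗ[ℂ] ExteriorAlgebra ℂ (E ⊗[ℂ] H))
    (hic : ∀ γ x₁ x₂ x₃ x₄ : E ⊗[ℂ] H,
      ic γ (wedge4 x₁ x₂ x₃ x₄)
        = B γ x₁ • wedge3 x₂ x₃ x₄ - B γ x₂ • wedge3 x₁ x₃ x₄
          + B γ x₃ • wedge3 x₁ x₂ x₄ - B γ x₄ • wedge3 x₁ x₂ x₃) :
    ic (te (Sum.inl ⟨0, by omega⟩) ⊗ₜ h)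
      ((∑ i : Fin n ⊕ Fin n,
          wedge4 (e (Sum.inl ⟨0, by omega⟩) ⊗ₜ h) (e (Sum.inl ⟨1, by omega⟩) ⊗ₜ h)
            (e i ⊗ₜ th) (te i ⊗ₜ th))
       - ∑ i : Fin n ⊕ Fin n,
          wedge4 (e (Sum.inl ⟨0, by omega⟩) ⊗ₜ th) (e (Sum.inl ⟨1, by omega⟩) ⊗ₜ th)
            (e i ⊗ₜ h) (te i ⊗ₜ h))
    = (∑ i : Fin n ⊕ Fin n,
        wedge3 (e i ⊗ₜ h) (te i ⊗ₜ h) (e (Sum.inl ⟨1, by omega⟩) ⊗ₜ th))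
      - (2 : ℂ) • wedge3 (e (Sum.inl ⟨0, by omega⟩) ⊗ₜ h)
          (e (Sum.inl ⟨1, by omega⟩) ⊗ₜ h) (te (Sum.inl ⟨0, by omega⟩) ⊗ₜ th) := by
  set i₀ : Fin n ⊕ Fin n := Sum.inl ⟨0, by omega⟩
  set i₁ : Fin n ⊕ Fin n := Sum.inl ⟨1, by omega⟩
  set γ := te i₀ ⊗ₜ[ℂ] h
  set j₀ : Fin n ⊕ Fin n := Sum.inr ⟨0, by omega⟩
  have hj₀ : te i₀ = e j₀ := hte1 _
  have hi₁ : i₁ ≠ i₀ := by simp [i₀, i₁]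
  have pair_h (x : E) : B γ (x ⊗ₜ h) = 0 := by rw [hB, hH2, mul_zero]
  have pair_e (i) : B γ (e i ⊗ₜ th) = -if i = i₀ then 1 else 0 := by
    rw [hB, hH1, mul_one, hωEskew, hunit]
  have pair_te (i) : B γ (te i ⊗ₜ th) = if j₀ = i then 1 else 0 := by
    rw [hB, hH1, mul_one, hj₀, hunit]
  have first (i) : ic γ (wedge4 (e i₀ ⊗ₜ h) (e i₁ ⊗ₜ h) (e i ⊗ₜ th) (te i ⊗ₜ th))
      = (-if i = i₀ then 1 else 0 : ℂ) • wedge3 (e i₀ ⊗ₜ h) (e i₁ ⊗ₜ h) (te i ⊗ₜ th)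
        - (if j₀ = i then 1 else 0 : ℂ) • wedge3 (e i₀ ⊗ₜ h) (e i₁ ⊗ₜ h) (e i ⊗ₜ th) := by
    rw [contract_wedge4_of_orthogonal_left B ic hic (pair_h _) (pair_h _), pair_e, pair_te]
  have second (i) : ic γ (wedge4 (e i₀ ⊗ₜ th) (e i₁ ⊗ₜ th) (e i ⊗ₜ h) (te i ⊗ₜ h))
      = -wedge3 (e i ⊗ₜ h) (te i ⊗ₜ h) (e i₁ ⊗ₜ th) := by
    rw [contract_wedge4_of_orthogonal_right B ic hic (pair_h _) (pair_h _), pair_e, pair_e,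
      wedge3_rotate (e i ⊗ₜ h), if_pos rfl, if_neg hi₁]
    simp
  simp only [map_sub, map_sum, first, second, Finset.sum_sub_distrib, Finset.sum_neg_distrib,
    neg_smul, ite_smul, one_smul, zero_smul, Finset.sum_ite_eq', Finset.sum_ite_eq,
    Finset.mem_univ, if_true]
  rw [← hj₀]
  module
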